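/- Define for j ≠ k the functions f_{jk}(θ) = cot((θ_j−θ_k)/2) on the chamber θ₁ < θ₂ < ⋯ < θₙ < θ₁+2π. Then the functions F_j = ∑_{k≠j} f_{jk} satisfy the identity ∑_{j=1}^n F_j² = −2 ∑_{j=1}^n F_j′ − n(n²−1)/3, where F_j′ = ∑_{k≠j} f′(θ_j−θ_k) with f(x) = cot(x/2) and f′(x) = −1/(2 sin²(x/2)). -/

import Mathlib

/-!
Write `g j k = cot ((θ j - θ k) / 2)`. Expanding `F j ^ 2` gives `∑ₖ g j k ^ 2` plus a sum of
`g j k * g j l` over ordered triples `(j, k, l)` of distinct indices. Grouping each triple with its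
two cyclic rotations and using `cot a * cot b + cot b * cot c + cot c * cot a = 1` for
`a + b + c = 0` (together with `cot (-x) = -cot x`) makes every group contribute `-1`, so the triple
sum is `-n(n-1)(n-2)/3`. Since `-2 f' = cot ^ 2 + 1`, the remaining terms give `n(n-1)`.
-/

open Finset Real

namespace Finset

theorem sum_sq_eq_sum_sq_add_sum_offDiag {ι R : Type*} [DecidableEq ι] [CommSemiring R]
    (s : Finset ι) (g : ι → R) :
    (∑ i ∈ s, g i) ^ 2 = ∑ i ∈ s, g i ^ 2 + ∑ q ∈ s.offDiag, g q.1 * g q.2 := by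
  rw [sq, sum_mul_sum, ← sum_product', ← diag_union_offDiag,
    sum_union (disjoint_diag_offDiag s), sum_diag]
  simp only [sq]

end Finset

section DistinctTriples

variable (ι : Type*) [Fintype ι] [DecidableEq ι]

def distinctTriples : Finset (ι × ι × ι) :=
  univ.filter fun p => p.1 ≠ p.2.1 ∧ p.1 ≠ p.2.2 ∧ p.2.1 ≠ p.2.2

variable {ι}

theorem mem_distinctTriples {p : ι × ι × ι} :
    p ∈ distinctTriples ι ↔ p.1 ≠ p.2.1 ∧ p.1 ≠ p.2.2 ∧ p.2.1 ≠ p.2.2 := by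
  simp [distinctTriples]

theorem sum_distinctTriples {M : Type*} [AddCommMonoid M] (f : ι → ι → ι → M) :
    ∑ p ∈ distinctTriples ι, f p.1 p.2.1 p.2.2 =
      ∑ j, ∑ q ∈ (univ.erase j).offDiag, f j q.1 q.2 :=
  sum_finset_product' (f := fun j (q : ι × ι) => f j q.1 q.2) _ _ _ fun p => by
    simp only [mem_distinctTriples, mem_univ, mem_offDiag, mem_erase]
    tauto

theorem sum_distinctTriples_rotate {M : Type*} [AddCommMonoid M] (f : ι → ι → ι → M) :
    ∑ p ∈ distinctTriples ι, f p.1 p.2.1 p.2.2 = ∑ p ∈ distinctTriples ι, f p.2.1 p.2.2 p.1 :=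
  sum_nbij' (fun p => (p.2.2, p.1, p.2.1)) (fun p => (p.2.1, p.2.2, p.1))
    (fun _ hp => by rw [mem_distinctTriples] at *; tauto)
    (fun _ hp => by rw [mem_distinctTriples] at *; tauto)
    (fun _ _ => rfl) (fun _ _ => rfl) (fun _ _ => rfl)

theorem card_distinctTriples :
    #(distinctTriples ι) = Fintype.card ι * (Fintype.card ι - 1) * (Fintype.card ι - 2) := by
  rw [card_eq_sum_ones, sum_distinctTriples (fun _ _ _ => 1)]
  simp only [offDiag_card, card_erase_of_mem (mem_univ _), card_univ,
    sum_const, smul_eq_mul]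
  rw [← Nat.mul_sub_one, mul_one, Nat.sub_sub, mul_assoc]

end DistinctTriples

theorem three_mul_sum_sq_sum_erase {ι R : Type*} [Fintype ι] [DecidableEq ι] [CommSemiring R]
    (g : ι → ι → R) (c : R)
    (hg : ∀ j k l, j ≠ k → j ≠ l → k ≠ l → g j k * g j l + g k l * g k j + g l j * g l k = c) :
    3 * ∑ j, (∑ k ∈ univ.erase j, g j k) ^ 2 =
      3 * ∑ j, ∑ k ∈ univ.erase j, g j k ^ 2 +
        c * (Fintype.card ι * (Fintype.card ι - 1) * (Fintype.card ι - 2) : ℕ) := by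
  set S := ∑ p ∈ distinctTriples ι, g p.1 p.2.1 * g p.1 p.2.2
  have hsq : ∑ j, (∑ k ∈ univ.erase j, g j k) ^ 2 = ∑ j, ∑ k ∈ univ.erase j, g j k ^ 2 + S := by
    simp only [sum_sq_eq_sum_sq_add_sum_offDiag, sum_add_distrib, S,
      sum_distinctTriples fun j k l => g j k * g j l]
  have hS : 3 * S = c * #(distinctTriples ι) := calc
    3 * S = ∑ p ∈ distinctTriples ι, g p.1 p.2.1 * g p.1 p.2.2 +
        ∑ p ∈ distinctTriples ι, g p.2.1 p.2.2 * g p.2.1 p.1 +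
        ∑ p ∈ distinctTriples ι, g p.2.2 p.1 * g p.2.2 p.2.1 := by
      rw [← sum_distinctTriples_rotate fun j k l => g k l * g k j,
        ← sum_distinctTriples_rotate fun j k l => g j k * g j l]
      ring
    _ = ∑ _p ∈ distinctTriples ι, c := by
      rw [← sum_add_distrib, ← sum_add_distrib]
      refine sum_congr rfl fun p hp => ?_
      obtain ⟨h₁, h₂, h₃⟩ := mem_distinctTriples.1 hp
      exact hg _ _ _ h₁ h₂ h₃
    _ = c * #(distinctTriples ι) := by rw [sum_const, nsmul_eq_mul, mul_comm]
  rw [← card_distinctTriples, ← hS, hsq]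
  ring

namespace Real

theorem cot_neg (x : ℝ) : cot (-x) = -cot x := by
  rw [cot_eq_cos_div_sin, cot_eq_cos_div_sin, sin_neg, cos_neg, div_neg]

theorem cot_sq_add_one {x : ℝ} (hx : sin x ≠ 0) : cot x ^ 2 + 1 = 1 / sin x ^ 2 := by
  rw [cot_eq_cos_div_sin]
  field_simp
  linarith [sin_sq_add_cos_sq x]

theorem cot_mul_cot_add_cot_mul_cot_add_cot_mul_cot {a b c : ℝ} (h : a + b + c = 0)
    (ha : sin a ≠ 0) (hb : sin b ≠ 0) (hc : sin c ≠ 0) :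
    cot a * cot b + cot b * cot c + cot c * cot a = 1 := by
  obtain rfl : c = -(a + b) := by linarith
  rw [sin_neg, neg_ne_zero] at hc
  simp only [cot_eq_cos_div_sin, sin_neg, cos_neg, div_neg]
  field_simp
  rw [sin_add, cos_add]
  ring

theorem cot_half_sub_cyclic {x y z : ℝ} (hxy : sin ((x - y) / 2) ≠ 0)
    (hyz : sin ((y - z) / 2) ≠ 0) (hzx : sin ((z - x) / 2) ≠ 0) :
    cot ((x - y) / 2) * cot ((x - z) / 2) + cot ((y - z) / 2) * cot ((y - x) / 2) +
      cot ((z - x) / 2) * cot ((z - y) / 2) = -1 := by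
  have h := cot_mul_cot_add_cot_mul_cot_add_cot_mul_cot (by ring) hxy hyz hzx
  rw [show (x - z) / 2 = -((z - x) / 2) by ring, show (y - x) / 2 = -((x - y) / 2) by ring,
    show (z - y) / 2 = -((y - z) / 2) by ring, cot_neg, cot_neg, cot_neg]
  linear_combination -h

theorem sin_half_sub_ne_zero {x y : ℝ} (hne : x ≠ y) (hlt : |x - y| < 2 * π) :
    sin ((x - y) / 2) ≠ 0 := by
  obtain ⟨hlo, hhi⟩ := abs_lt.1 hlt
  rw [Ne, sin_eq_zero_iff_of_lt_of_lt (by linarith) (by linarith)]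
  exact fun h => hne (by linarith)

end Real

/-- On the chamber θ₁ < ⋯ < θₙ < θ₁ + 2π, with F_j = ∑_{k≠j} cot((θ_j−θ_k)/2)
and F_j′ = ∑_{k≠j} (−1/(2sin²((θ_j−θ_k)/2))), one has
∑_j F_j² = −2∑_j F_j′ − n(n²−1)/3. -/
theorem stmt_3 (n : ℕ) (hn : 2 ≤ n) (θ : Fin n → ℝ)
    (hord : ∀ i j : Fin n, i < j → θ i < θ j)
    (hwin : ∀ i : Fin n, θ i < θ ⟨0, by omega⟩ + 2 * Real.pi) :
    ∑ j, (∑ k ∈ Finset.univ.erase j, Real.cot ((θ j - θ k) / 2)) ^ 2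
      = -2 * ∑ j, (∑ k ∈ Finset.univ.erase j,
            (-(1 / (2 * Real.sin ((θ j - θ k) / 2) ^ 2))))
        - (n : ℝ) * ((n : ℝ) ^ 2 - 1) / 3 := by
  have hsin : ∀ j k, j ≠ k → sin ((θ j - θ k) / 2) ≠ 0 := by
    have hlo : ∀ i, θ ⟨0, by omega⟩ ≤ θ i := fun i => StrictMono.monotone hord (Nat.zero_le i)
    intro j k hjk
    refine sin_half_sub_ne_zero ((StrictMono.injective hord).ne hjk) (abs_sub_lt_iff.2 ?_)
    constructor <;> linarith [hlo j, hlo k, hwin j, hwin k]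
  have hsum_deriv : ∀ j, ∑ k ∈ univ.erase j, -(1 / (2 * sin ((θ j - θ k) / 2) ^ 2)) =
      -(∑ k ∈ univ.erase j, cot ((θ j - θ k) / 2) ^ 2 + (n - 1)) / 2 := by
    intro j
    have hcot : ∀ k ∈ univ.erase j, -(1 / (2 * sin ((θ j - θ k) / 2) ^ 2)) =
        -(cot ((θ j - θ k) / 2) ^ 2 + 1) / 2 := fun k hk => by
      rw [cot_sq_add_one (hsin j k (ne_of_mem_erase hk).symm)]
      ring
    rw [sum_congr rfl hcot, ← sum_div, sum_neg_distrib, sum_add_distrib, sum_const,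
      card_erase_of_mem (mem_univ j), card_univ, Fintype.card_fin, nsmul_one,
      Nat.cast_pred (by omega)]
  have hexpand := three_mul_sum_sq_sum_erase (fun j k => cot ((θ j - θ k) / 2)) (-1)
    fun j k l hjk hjl hkl => cot_half_sub_cyclic (hsin j k hjk) (hsin k l hkl) (hsin l j hjl.symm)
  simp only [hsum_deriv, Fintype.card_fin, ← sum_div, sum_neg_distrib, sum_add_distrib,
    sum_const, card_univ, nsmul_eq_mul] at hexpand ⊢
  push_cast [Nat.cast_sub (by omega : 1 ≤ n), Nat.cast_sub hn] at hexpand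
  linear_combination hexpand / 3
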